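/- arXiv:2003.12959 — 6 statements merged into one kernel-verified Lean document; each statement's English description precedes it below -/
import Mathlib

section
/- For every positive integer n, the general position number of the n-dimensional integer lattice equals 2^(2^(n-1)). That is: every general position set S ⊆ ℤ^n has cardinality at most 2^(2^(n-1)), and there exists a general position set S ⊆ ℤ^n with exactly 2^(2^(n-1)) elements. -/
/-- The ℓ1 (graph) distance on the integer lattice ℤ^n. -/
def d1 {n : ℕ} (u v : Fin n → ℤ) : ℤ := ∑ i, |u i - v i|

/-- A set `S ⊆ ℤ^n` is a general position set if no three pairwise distinct
points of `S` lie on a common geodesic of the grid graph `P_∞^n`. -/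
def IsGPSet {n : ℕ} (S : Set (Fin n → ℤ)) : Prop :=
  ∀ u ∈ S, ∀ v ∈ S, ∀ w ∈ S, u ≠ v → u ≠ w → v ≠ w →
    d1 u w ≠ d1 u v + d1 v w

/-!
Three points of `ℤⁿ` lie on a common geodesic exactly when the middle one is between the other two
in every coordinate.

Upper bound: order more than `2^(2^d)` points of `ℤ^(d+1)` lexicographically, so that the first
coordinate is sorted, and apply the Erdős–Szekeres theorem (more than `m²` terms contain a monotone
subsequence of length `m + 1`) once for each of the other `d` coordinates. Since squaring undoes one
step of `2^(2^d)`, three points remain that are monotone in every coordinate.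

Lower bound: the points `(e, x e)`, `e < 2^(2^d)`, are in general position as soon as no triple of
`x` is coordinatewise monotone. Such a zigzag sequence of length `M²` in `ℤ^(d+1)` comes from one of
length `M` in `ℤ^d` by lexicographic squaring: write `e = M b + p`, take `M x b + x p`, and append a
coordinate that rises across the blocks `b` and falls inside each block.
-/

open Finset Set
open scoped Interval

theorem abs_sub_eq_abs_sub_add_abs_sub_iff {α : Type*} [AddCommGroup α] [LinearOrder α]
    [IsOrderedAddMonoid α] {a b c : α} :
    |a - c| = |a - b| + |b - c| ↔ b ∈ [[a, c]] := by
  rw [show a - c = (a - b) + (b - c) by abel, abs_add_eq_add_abs_iff, Set.mem_uIcc]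
  simp only [sub_nonneg, sub_nonpos]
  tauto

theorem Set.mem_uIcc_pi_iff {ι : Type*} {α : ι → Type*} [∀ i, Lattice (α i)]
    {a b x : ∀ i, α i} :
    x ∈ [[a, b]] ↔ ∀ i, x i ∈ [[a i, b i]] := by
  rw [← pi_univ_uIcc, mem_univ_pi]

theorem d1_eq_add_iff_mem_uIcc {n : ℕ} {u v w : Fin n → ℤ} :
    d1 u w = d1 u v + d1 v w ↔ v ∈ [[u, w]] := by
  rw [d1, d1, d1, ← Finset.sum_add_distrib,
    Finset.sum_eq_sum_iff_of_le fun i _ => abs_sub_le (u i) (v i) (w i), Set.mem_uIcc_pi_iff]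
  simp only [Finset.mem_univ, true_implies, abs_sub_eq_abs_sub_add_abs_sub_iff]

theorem Finset.exists_monotoneOn_or_antitoneOn_of_mul_lt_card {ι α : Type*} [LinearOrder ι]
    [LinearOrder α] (f : ι → α) {s : Finset ι} {m : ℕ} (h : m * m < #s) :
    ∃ t ⊆ s, m < #t ∧ (MonotoneOn f t ∨ AntitoneOn f t) := by
  classical
  by_cases hmono : ∃ t ⊆ s, m < #t ∧ MonotoneOn f t
  · obtain ⟨t, hts, ht, hf⟩ := hmono
    exact ⟨t, hts, ht, .inl hf⟩
  push Not at hmono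
  -- `chainLength i` is the length of a longest monotone subsequence of `s` ending at `i`; it grows
  -- along every non-decreasing step, so its level sets are antitone.
  let chains : ι → Finset (Finset ι) := fun i =>
    {t ∈ {j ∈ s | j ≤ i}.powerset | i ∈ t ∧ MonotoneOn f t}
  have singleton_mem {i} (hi : i ∈ s) : {i} ∈ chains i := by
    simp [chains, hi]
  let chainLength : ι → ℕ := fun i => (chains i).sup card
  have chainLength_lt {i j} (hi : i ∈ s) (hj : j ∈ s) (hij : i < j) (hf : f i ≤ f j) :
      chainLength i < chainLength j := by
    obtain ⟨t, ht, hlen⟩ := exists_mem_eq_sup _ ⟨_, singleton_mem hi⟩ card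
    simp only [chains, mem_filter, mem_powerset] at ht
    obtain ⟨hts, hit, hmon⟩ := ht
    have hle : ∀ k ∈ t, k ≤ i := fun k hk => (mem_filter.1 (hts hk)).2
    have hjt : j ∉ t := fun hj' => (hle j hj').not_gt hij
    calc chainLength i < #(insert j t) := by
          rw [card_insert_of_notMem hjt, ← hlen]; exact Nat.lt_succ_self _
      _ ≤ chainLength j := by
        refine le_sup (f := card) ?_
        simp only [chains, mem_filter, mem_powerset, mem_insert, true_or, true_and, coe_insert]
        refine ⟨insert_subset (mem_filter.2 ⟨hj, le_rfl⟩) fun k hk => ?_, ?_⟩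
        · exact mem_filter.2 ⟨(mem_filter.1 (hts hk)).1, (hle k hk).trans hij.le⟩
        refine monotoneOn_insert_iff.2 ⟨fun k hk _ => (hmon hk hit (hle k hk)).trans hf,
          fun k hk hjk => absurd ((hle k hk).trans_lt hij) hjk.not_gt, hmon⟩
  have chainLength_mem {i} (hi : i ∈ s) : chainLength i ∈ Icc 1 m := by
    refine mem_Icc.2 ⟨le_sup (f := card) (singleton_mem hi), Finset.sup_le fun t ht => ?_⟩
    simp only [chains, mem_filter, mem_powerset] at ht
    exact not_lt.1 fun hm => hmono t (ht.1.trans (filter_subset _ _)) hm ht.2.2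
  obtain ⟨y, -, hy⟩ := exists_lt_card_fiber_of_mul_lt_card_of_maps_to
    (fun i hi => chainLength_mem hi) (by simpa using h)
  refine ⟨{i ∈ s | chainLength i = y}, filter_subset _ _, hy, .inr fun i hi j hj hij => ?_⟩
  simp only [coe_filter, Set.mem_ofPred_eq] at hi hj
  rcases hij.eq_or_lt with rfl | hij
  · rfl
  by_contra! hlt
  exact (chainLength_lt hi.1 hj.1 hij hlt.le).ne (hi.2.trans hj.2.symm)

theorem Finset.exists_lt_lt_mem_uIcc_of_pow_pow_lt_card {ι α : Type*} [LinearOrder ι]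
    [LinearOrder α] {d : ℕ} (a : ι → Fin d → α) {s : Finset ι} (hs : 2 ^ 2 ^ d < #s) :
    ∃ i ∈ s, ∃ j ∈ s, ∃ k ∈ s, i < j ∧ j < k ∧ a j ∈ [[a i, a k]] := by
  induction d generalizing s with
  | zero =>
    let e := s.orderEmbOfFin rfl
    refine ⟨e ⟨0, by omega⟩, s.orderEmbOfFin_mem rfl _, e ⟨1, by omega⟩,
      s.orderEmbOfFin_mem rfl _, e ⟨2, by omega⟩, s.orderEmbOfFin_mem rfl _,
      e.strictMono (by simp), e.strictMono (by simp), Set.mem_uIcc_pi_iff.2 fun c => c.elim0⟩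
  | succ d ih =>
    obtain ⟨t, hts, ht, hmono⟩ := s.exists_monotoneOn_or_antitoneOn_of_mul_lt_card
      (fun i => a i (Fin.last d)) (m := 2 ^ 2 ^ d)
      (by rwa [← pow_add, ← two_mul, ← pow_succ'])
    obtain ⟨i, hi, j, hj, k, hk, hij, hjk, hbtw⟩ := ih (fun i c => a i c.castSucc) ht
    refine ⟨i, hts hi, j, hts hj, k, hts hk, hij, hjk, Set.mem_uIcc_pi_iff.2 fun c => ?_⟩
    induction c using Fin.lastCases with
    | last =>
      rcases hmono with hmono | hmono
      · exact Set.mem_uIcc.2 (.inl ⟨hmono hi hj hij.le, hmono hj hk hjk.le⟩)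
      · exact Set.mem_uIcc.2 (.inr ⟨hmono hj hk hjk.le, hmono hi hj hij.le⟩)
    | cast c => exact Set.mem_uIcc_pi_iff.1 hbtw c

theorem Pi.Lex.apply_zero_le_of_lt {n : ℕ} {β : Fin (n + 1) → Type*} [∀ i, Preorder (β i)]
    {x y : Lex (∀ i, β i)} (h : x < y) : ofLex x 0 ≤ ofLex y 0 := by
  obtain ⟨i, hlt, hi⟩ := h
  by_cases hi0 : i = 0
  · subst hi0
    exact hi.le
  · exact (hlt 0 (Fin.pos_iff_ne_zero.2 hi0)).le

theorem Set.encard_le_coe_of_forall_finset {α : Type*} {S : Set α} {N : ℕ}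
    (h : ∀ t : Finset α, ↑t ⊆ S → #t ≤ N) : S.encard ≤ N := by
  by_contra! hlt
  obtain ⟨T, hTS, hT⟩ := exists_subset_encard_eq (Order.add_one_le_of_lt hlt)
  have hfin : T.Finite := finite_of_encard_eq_coe (k := N + 1) (by rw [hT]; norm_cast)
  have := h hfin.toFinset (by simpa using hTS)
  rw [hfin.encard_eq_coe_toFinset_card] at hT
  norm_cast at hT
  omega

theorem IsGPSet.card_le {d : ℕ} {S : Set (Fin (d + 1) → ℤ)} (hS : IsGPSet S)
    {t : Finset (Fin (d + 1) → ℤ)} (ht : ↑t ⊆ S) : #t ≤ 2 ^ 2 ^ d := by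
  by_contra! hlt
  obtain ⟨i, hi, j, hj, k, hk, hij, hjk, hbtw⟩ :=
    (t.map toLex.toEmbedding).exists_lt_lt_mem_uIcc_of_pow_pow_lt_card
      (fun (x : Lex (Fin (d + 1) → ℤ)) c => ofLex x c.succ) (by simpa using hlt)
  rw [mem_map_equiv] at hi hj hk
  have hmem : ofLex j ∈ [[ofLex i, ofLex k]] := by
    refine Set.mem_uIcc_pi_iff.2 fun c => ?_
    induction c using Fin.cases with
    | zero => exact Set.mem_uIcc.2 (.inl ⟨Pi.Lex.apply_zero_le_of_lt hij,
        Pi.Lex.apply_zero_le_of_lt hjk⟩)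
    | succ c => exact Set.mem_uIcc_pi_iff.1 hbtw c
  exact hS _ (ht hi) _ (ht hj) _ (ht hk) hij.ne (hij.trans hjk).ne hjk.ne
    (d1_eq_add_iff_mem_uIcc.2 hmem)

theorem IsGPSet.encard_le {d : ℕ} {S : Set (Fin (d + 1) → ℤ)} (hS : IsGPSet S) :
    S.encard ≤ 2 ^ 2 ^ d := by
  exact_mod_cast Set.encard_le_coe_of_forall_finset fun _ ht => hS.card_le ht

theorem Set.notMem_uIcc_iff {α : Type*} [LinearOrder α] {a b c : α} :
    b ∉ [[a, c]] ↔ (a < b ∧ c < b) ∨ (b < a ∧ b < c) := by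
  rw [Set.mem_uIcc]
  grind

theorem Nat.div_lt_div_or_mod_lt_of_lt {i j M : ℕ} (h : i < j) :
    i / M < j / M ∨ (i / M = j / M ∧ i % M < j % M) := by
  refine (Nat.div_le_div_right h.le).lt_or_eq.imp_right fun hdiv => ⟨hdiv, ?_⟩
  have := Nat.div_add_mod i M
  have := Nat.div_add_mod j M
  rw [hdiv] at *
  omega

theorem Int.mul_add_lt_mul_add_of_lt {M a b x y : ℤ} (hx₀ : 0 ≤ x) (hx : x < M) (hy : 0 ≤ y)
    (hab : a < b) : M * a + x < M * b + y :=
  calc M * a + x < M * (a + 1) := by linarith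
    _ ≤ M * b := mul_le_mul_of_nonneg_left (by omega) (by omega)
    _ ≤ M * b + y := by linarith

theorem Int.mul_add_notMem_uIcc {M a b c x y z : ℤ} (hx : 0 ≤ x ∧ x < M)
    (hy : 0 ≤ y ∧ y < M) (hz : 0 ≤ z ∧ z < M) (h : b ∉ [[a, c]]) :
    M * b + y ∉ [[M * a + x, M * c + z]] := by
  rw [Set.notMem_uIcc_iff] at h ⊢
  rcases h with ⟨h₁, h₂⟩ | ⟨h₁, h₂⟩
  · exact .inl ⟨mul_add_lt_mul_add_of_lt hx.1 hx.2 hy.1 h₁,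
      mul_add_lt_mul_add_of_lt hz.1 hz.2 hy.1 h₂⟩
  · exact .inr ⟨mul_add_lt_mul_add_of_lt hy.1 hy.2 hx.1 h₁,
      mul_add_lt_mul_add_of_lt hy.1 hy.2 hz.1 h₂⟩

def IsZigzag {d : ℕ} (N : ℕ) (x : ℕ → Fin d → ℤ) : Prop :=
  (∀ e < N, ∀ c, x e c ∈ Set.Ico 0 (N : ℤ)) ∧
    ∀ i j k, i < j → j < k → k < N → ∃ c, x j c ∉ [[x i c, x k c]]

def lexSquare {d : ℕ} (M : ℕ) (x : ℕ → Fin d → ℤ) (e : ℕ) : Fin (d + 1) → ℤ :=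
  Fin.snoc (fun c => M * x (e / M) c + x (e % M) c)
    (M * (e / M : ℕ) + (M - 1 - (e % M : ℕ)))

@[simp]
theorem lexSquare_castSucc {d M : ℕ} (x : ℕ → Fin d → ℤ) (e : ℕ) (c : Fin d) :
    lexSquare M x e c.castSucc = M * x (e / M) c + x (e % M) c := by
  simp [lexSquare]

@[simp]
theorem lexSquare_last {d M : ℕ} (x : ℕ → Fin d → ℤ) (e : ℕ) :
    lexSquare M x e (Fin.last d) = M * (e / M : ℕ) + (M - 1 - (e % M : ℕ)) := by
  simp [lexSquare]

theorem IsZigzag.lexSquare_mem_Ico {d M : ℕ} {x : ℕ → Fin d → ℤ} (hx : IsZigzag M x)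
    {e : ℕ} (he : e < M * M) (c : Fin (d + 1)) :
    lexSquare M x e c ∈ Set.Ico 0 ((M * M : ℕ) : ℤ) := by
  have hM : 0 < M := Nat.pos_of_mul_pos_left (by omega : 0 < M * M)
  have hb : e / M < M := Nat.div_lt_of_lt_mul he
  have hp : e % M < M := Nat.mod_lt e hM
  rw [Nat.cast_mul, ← add_zero ((M : ℤ) * M)]
  induction c using Fin.lastCases with
  | last =>
    rw [lexSquare_last]
    constructor
    · have : (0 : ℤ) ≤ M - 1 - (e % M : ℕ) := by omega
      positivity
    · exact Int.mul_add_lt_mul_add_of_lt (by omega) (by omega) le_rfl (by exact_mod_cast hb)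
  | cast c =>
    obtain ⟨hb₀, hb₁⟩ := hx.1 _ hb c
    obtain ⟨hp₀, hp₁⟩ := hx.1 _ hp c
    rw [lexSquare_castSucc]
    exact ⟨by positivity, Int.mul_add_lt_mul_add_of_lt hp₀ hp₁ le_rfl hb₁⟩

theorem IsZigzag.lexSquare {d M : ℕ} {x : ℕ → Fin d → ℤ} (hx : IsZigzag M x) :
    IsZigzag (M * M) (lexSquare M x) := by
  refine ⟨fun e he c => hx.lexSquare_mem_Ico he c, fun i j k hij hjk hk => ?_⟩
  have hM : 0 < M := Nat.pos_of_mul_pos_left (by omega : 0 < M * M)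
  have hpos (t : ℕ) (c : Fin d) : 0 ≤ x (t % M) c ∧ x (t % M) c < M :=
    hx.1 _ (Nat.mod_lt t hM) c
  have := Nat.mod_lt i hM
  have := Nat.mod_lt j hM
  have := Nat.mod_lt k hM
  rcases Nat.div_lt_div_or_mod_lt_of_lt (M := M) hij with hbij | ⟨hbij, hpij⟩ <;>
    rcases Nat.div_lt_div_or_mod_lt_of_lt (M := M) hjk with hbjk | ⟨hbjk, hpjk⟩
  · obtain ⟨c, hc⟩ := hx.2 _ _ _ hbij hbjk (Nat.div_lt_of_lt_mul hk)
    refine ⟨c.castSucc, ?_⟩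
    simp only [lexSquare_castSucc]
    exact Int.mul_add_notMem_uIcc (hpos i c) (hpos j c) (hpos k c) hc
  · refine ⟨Fin.last d, ?_⟩
    simp only [lexSquare_last, Set.notMem_uIcc_iff, ← hbjk]
    exact .inl ⟨Int.mul_add_lt_mul_add_of_lt (by omega) (by omega) (by omega)
      (by exact_mod_cast hbij), by omega⟩
  · refine ⟨Fin.last d, ?_⟩
    simp only [lexSquare_last, Set.notMem_uIcc_iff, ← hbij]
    exact .inr ⟨by omega, Int.mul_add_lt_mul_add_of_lt (by omega) (by omega) (by omega)
      (by exact_mod_cast hbij.trans_lt hbjk)⟩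
  · obtain ⟨c, hc⟩ := hx.2 _ _ _ hpij hpjk (Nat.mod_lt k hM)
    refine ⟨c.castSucc, ?_⟩
    simp only [lexSquare_castSucc, Set.notMem_uIcc_iff, hbij, hbjk] at hc ⊢
    omega

def zigzag : (d : ℕ) → ℕ → Fin d → ℤ
  | 0 => fun _ => Fin.elim0
  | d + 1 => lexSquare (2 ^ 2 ^ d) (zigzag d)

theorem isZigzag_zigzag (d : ℕ) : IsZigzag (2 ^ 2 ^ d) (zigzag d) := by
  induction d with
  | zero => exact ⟨fun _ _ c => c.elim0, fun i j k hij hjk hk => by simp at hk; omega⟩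
  | succ d ih => rw [pow_succ, pow_mul, sq]; exact ih.lexSquare

theorem IsZigzag.isGPSet_image {d N : ℕ} {x : ℕ → Fin d → ℤ} (hx : IsZigzag N x) :
    IsGPSet ((fun e : ℕ => (Fin.cons (e : ℤ) (x e) : Fin (d + 1) → ℤ)) '' Set.Iio N) := by
  rintro _ ⟨i, hi, rfl⟩ _ ⟨j, -, rfl⟩ _ ⟨k, hk, rfl⟩ hij hik hjk h
  rw [d1_eq_add_iff_mem_uIcc, Set.mem_uIcc_pi_iff] at h
  have hij : i ≠ j := by rintro rfl; exact hij rfl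
  have hjk : j ≠ k := by rintro rfl; exact hjk rfl
  have h₀ : (j : ℤ) ∈ [[(i : ℤ), k]] := by simpa using h 0
  rcases Set.mem_uIcc.1 h₀ with ⟨h₁, h₂⟩ | ⟨h₁, h₂⟩
  · obtain ⟨c, hc⟩ := hx.2 i j k (by omega) (by omega) hk
    exact hc (by simpa using h c.succ)
  · obtain ⟨c, hc⟩ := hx.2 k j i (by omega) (by omega) hi
    exact hc (by simpa [Set.uIcc_comm] using h c.succ)

theorem encard_image_Iio_cons {d N : ℕ} (x : ℕ → Fin d → ℤ) :
    ((fun e : ℕ => (Fin.cons (e : ℤ) (x e) : Fin (d + 1) → ℤ)) '' Set.Iio N).encard =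
      N := by
  rw [Set.InjOn.encard_image fun i _ j _ h => by simpa using congrFun h 0]
  exact Set.Nat.encard_range N

/-- The general position number of the `n`-dimensional integer lattice equals
`2^(2^(n-1))`: every general position set in `ℤ^n` has at most `2^(2^(n-1))`
elements, and there is one with exactly that many elements. -/
theorem gp_number_of_integer_lattice (n : ℕ) (hn : 0 < n) :
    (∀ S : Set (Fin n → ℤ), IsGPSet S → S.encard ≤ 2 ^ 2 ^ (n - 1)) ∧
    (∃ S : Set (Fin n → ℤ), IsGPSet S ∧ S.encard = 2 ^ 2 ^ (n - 1)) := by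
  obtain ⟨d, rfl⟩ : ∃ d, n = d + 1 := ⟨n - 1, by omega⟩
  refine ⟨fun S hS => hS.encard_le, _, (isZigzag_zigzag d).isGPSet_image, ?_⟩
  rw [encard_image_Iio_cons]
  norm_cast
end

section
/- For every positive integer n there exists a set S ⊆ ℤ^n with |S| = 2^(2^(n-1)) such that no three pairwise distinct points u, v, w ∈ S satisfy d₁(u,w) = d₁(u,v) + d₁(v,w). -/
/-!
Fix `t = 2 ^ (n - 1)` sign vectors `x j ∈ {±1}ⁿ`, no two equal or opposite (their first
coordinate is `1`), and take the `2 ^ t` points `p B = ∑_{j ∈ B} 2 ^ j • x j`. For `A ≠ B` the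
top index `r` where they differ dominates the lower binary digits, so every coordinate of
`p B - p A` has the sign of `x r` if `r ∈ B` and of `-x r` otherwise. On an `ℓ¹` geodesic
`p A, p B, p C` the two steps have the same coordinatewise signs, which forces the same `r` and the
same direction: `r ∈ B \ A` and `r ∈ C \ B`, or `r ∈ A \ B` and `r ∈ B \ C`, both absurd.
-/

open Finset Function

lemma mul_nonneg_of_d1_eq_add {n : ℕ} {u v w : Fin n → ℤ} (h : d1 u w = d1 u v + d1 v w)
    (i : Fin n) : 0 ≤ (v i - u i) * (w i - v i) := by
  have hcoord : ∀ i ∈ univ, |u i - w i| = |u i - v i| + |v i - w i| := by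
    refine (sum_eq_sum_iff_of_le fun i _ => abs_sub_le _ _ _).mp ?_
    rw [sum_add_distrib]
    exact h
  have hsplit : |(v i - u i) + (w i - v i)| = |v i - u i| + |w i - v i| := by
    rw [abs_sub_comm (v i), abs_sub_comm (w i), ← hcoord i (mem_univ i), ← abs_neg]
    ring_nf
  rcases (abs_add_eq_add_abs_iff _ _).mp hsplit with ⟨hp, hq⟩ | ⟨hp, hq⟩
  · exact mul_nonneg hp hq
  · exact mul_nonneg_of_nonpos_of_nonpos hp hq

lemma Int.sign_eq_sign_of_mul_nonneg {p q : ℤ} (h : 0 ≤ p * q) (hp : p ≠ 0) (hq : q ≠ 0) :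
    p.sign = q.sign := by
  rcases hp.lt_or_gt with hp | hp <;> rcases hq.lt_or_gt with hq | hq
  · rw [Int.sign_eq_neg_one_of_neg hp, Int.sign_eq_neg_one_of_neg hq]
  · nlinarith
  · nlinarith
  · rw [Int.sign_eq_one_of_pos hp, Int.sign_eq_one_of_pos hq]

lemma Int.sign_sum_mul_eq_of_leading {ι : Type*} [Fintype ι] [LinearOrder ι]
    [LocallyFiniteOrderBot ι] {d w : ι → ℤ} {r : ι} (hd : ∀ j, |d j| ≤ 1) (hdr : d r ≠ 0)
    (htop : ∀ j, r < j → d j = 0) (hw : ∀ j, 0 ≤ w j) (hwr : ∑ j ∈ Iio r, w j < w r) :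
    (∑ j, d j * w j).sign = d r := by
  have hsplit : ∑ j, d j * w j = ∑ j ∈ Iio r, d j * w j + d r * w r := by
    rw [sum_Iio_add_eq_sum_Iic]
    refine (sum_subset (subset_univ _) fun j _ hj => ?_).symm
    rw [htop j (by simpa using hj), zero_mul]
  have htail : |∑ j ∈ Iio r, d j * w j| < w r := calc
    _ ≤ ∑ j ∈ Iio r, |d j * w j| := abs_sum_le_sum_abs _ _
    _ ≤ ∑ j ∈ Iio r, w j := sum_le_sum fun j _ => by
      rw [abs_mul, abs_of_nonneg (hw j)]
      exact mul_le_of_le_one_left (hw j) (hd j)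
    _ < w r := hwr
  obtain ⟨htail_lo, htail_hi⟩ := abs_lt.mp htail
  have hdr_pm : d r = 1 ∨ d r = -1 := by
    have := abs_le.mp (hd r)
    omega
  rcases hdr_pm with h | h <;> rw [hsplit, h]
  · exact Int.sign_eq_one_of_pos (by linarith)
  · exact Int.sign_eq_neg_one_of_neg (by linarith)

lemma sum_Iio_two_pow_lt {t : ℕ} (r : Fin t) : ∑ j ∈ Iio r, (2 : ℤ) ^ (j : ℕ) < 2 ^ (r : ℕ) := by
  have hgeom := geom_sum_mul (2 : ℤ) r
  have hIio : ∑ j ∈ Iio r, (2 : ℤ) ^ (j : ℕ) = ∑ k ∈ range r, (2 : ℤ) ^ k := by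
    rw [← Nat.Iio_eq_range, ← Fin.map_valEmbedding_Iio, sum_map]
    rfl
  rw [hIio]
  linarith

section BinaryComb

variable {n t : ℕ} (x : Fin t → Fin n → ℤ)

def binaryComb (b : Fin t → Bool) : Fin n → ℤ :=
  fun i => ∑ j, (b j).toInt * 2 ^ (j : ℕ) * x j i

variable {x}

lemma exists_sign_binaryComb_sub (hx : ∀ j i, |x j i| = 1) {a b : Fin t → Bool} (hab : a ≠ b) :
    ∃ r, a r ≠ b r ∧
      ∀ i, (binaryComb x b i - binaryComb x a i).sign = (if b r then 1 else -1) * x r i := by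
  obtain ⟨r, hr, hmax⟩ := exists_max_image (univ.filter fun j => a j ≠ b j) id
    (by simpa [Finset.Nonempty, funext_iff] using hab)
  simp only [mem_filter, mem_univ, true_and, id] at hr hmax
  refine ⟨r, hr, fun i => ?_⟩
  have hdiff : binaryComb x b i - binaryComb x a i =
      ∑ j, ((b j).toInt - (a j).toInt) * x j i * 2 ^ (j : ℕ) := by
    rw [binaryComb, binaryComb, ← sum_sub_distrib]
    exact sum_congr rfl fun j _ => by ring
  have hdigit : ∀ j, |((b j).toInt - (a j).toInt) * x j i| ≤ 1 := fun j => by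
    cases a j <;> cases b j <;> simp [hx]
  have hlead : ((b r).toInt - (a r).toInt) * x r i = (if b r then 1 else -1) * x r i := by
    cases ha : a r <;> cases hb : b r <;> simp_all
  have htop : ∀ j, r < j → ((b j).toInt - (a j).toInt) * x j i = 0 := fun j hj => by
    have : a j = b j := by_contra fun hne => (hmax j hne).not_gt hj
    simp [this]
  have hxr : x r i ≠ 0 := fun h0 => by simpa [h0] using hx r i
  have hlead_ne : ((b r).toInt - (a r).toInt) * x r i ≠ 0 := by
    rw [hlead]
    exact mul_ne_zero (by split_ifs <;> norm_num) hxr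
  rw [hdiff, Int.sign_sum_mul_eq_of_leading hdigit hlead_ne htop (fun j => by positivity)
    (sum_Iio_two_pow_lt r), hlead]

lemma binaryComb_sub_ne_zero (hx : ∀ j i, |x j i| = 1) {a b : Fin t → Bool} (hab : a ≠ b)
    (i : Fin n) : binaryComb x b i - binaryComb x a i ≠ 0 := by
  obtain ⟨r, -, hr⟩ := exists_sign_binaryComb_sub hx hab
  have habs : |(if b r then 1 else -1) * x r i| = 1 := by
    rw [abs_mul, hx]
    split_ifs <;> simp
  intro h0
  rw [← hr i, h0, Int.sign_zero, abs_zero] at habs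
  exact zero_ne_one habs

lemma binaryComb_injective (hx : ∀ j i, |x j i| = 1) (hn : 0 < n) :
    Injective (binaryComb x) := fun a b hab => by_contra fun hne =>
  binaryComb_sub_ne_zero hx hne ⟨0, hn⟩ (by rw [hab, sub_self])

lemma d1_binaryComb_ne_add (hx : ∀ j i, |x j i| = 1) (hinj : Injective x)
    (hanti : ∀ r s, x r ≠ -x s) {a b c : Fin t → Bool} (hab : a ≠ b) (hbc : b ≠ c) :
    d1 (binaryComb x a) (binaryComb x c) ≠
      d1 (binaryComb x a) (binaryComb x b) + d1 (binaryComb x b) (binaryComb x c) := by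
  intro h
  obtain ⟨r, hr, hsign_r⟩ := exists_sign_binaryComb_sub hx hab
  obtain ⟨s, hs, hsign_s⟩ := exists_sign_binaryComb_sub hx hbc
  have hdir : ∀ i, (if b r then 1 else -1) * x r i = (if c s then 1 else -1) * x s i := fun i => by
    rw [← hsign_r i, ← hsign_s i]
    exact Int.sign_eq_sign_of_mul_nonneg (mul_nonneg_of_d1_eq_add h i)
      (binaryComb_sub_ne_zero hx hab i) (binaryComb_sub_ne_zero hx hbc i)
  cases hbr : b r <;> cases hcs : c s <;>
    simp only [hbr, hcs, Bool.false_eq_true, ↓reduceIte, neg_mul, one_mul, neg_inj] at hdir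
  · cases hinj (funext hdir); exact hs (hbr.trans hcs.symm)
  · exact hanti s r (funext fun i => by simp [hdir])
  · exact hanti r s (funext hdir)
  · cases hinj (funext hdir); exact hs (hbr.trans hcs.symm)

end BinaryComb

lemma exists_nonantipodal_sign_vectors (m : ℕ) : ∃ x : Fin (2 ^ m) → Fin (m + 1) → ℤ,
    Injective x ∧ (∀ r s, x r ≠ -x s) ∧ ∀ j i, |x j i| = 1 := by
  let pattern : (Fin m → Bool) → Fin (m + 1) → ℤ := fun β =>
    Fin.cons 1 fun k => if β k then 1 else -1
  have hpattern : Injective pattern := fun β γ h => by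
    funext k
    have := congrFun (Fin.cons_injective2 h).2 k
    cases hβ : β k <;> cases hγ : γ k <;> simp_all
  let e : (Fin m → Bool) ≃ Fin (2 ^ m) := Fintype.equivFinOfCardEq (by simp)
  refine ⟨pattern ∘ e.symm, hpattern.comp e.symm.injective, fun r s h => ?_, fun j i => ?_⟩
  · have := congrFun h 0
    simp [pattern] at this
  · refine Fin.cases (by simp [pattern]) (fun k => ?_) i
    simp only [comp_apply, pattern, Fin.cons_succ]
    split_ifs <;> simp

/-- For every positive integer `n` there is a general position set in `ℤ^n`
with exactly `2^(2^(n-1))` elements. -/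
theorem gp_lower_bound_of_integer_lattice (n : ℕ) (hn : 0 < n) :
    ∃ S : Set (Fin n → ℤ), S.encard = 2 ^ 2 ^ (n - 1) ∧
      ∀ u ∈ S, ∀ v ∈ S, ∀ w ∈ S, u ≠ v → u ≠ w → v ≠ w →
        d1 u w ≠ d1 u v + d1 v w := by
  obtain ⟨m, rfl⟩ := Nat.exists_eq_add_one_of_ne_zero hn.ne'
  obtain ⟨x, hinj, hanti, hx⟩ := exists_nonantipodal_sign_vectors m
  refine ⟨Set.range (binaryComb x), ?_, ?_⟩
  · rw [← Set.image_univ, (binaryComb_injective hx hn).injOn.encard_image, Set.encard_univ]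
    simp
  · rintro _ ⟨a, rfl⟩ _ ⟨b, rfl⟩ _ ⟨c, rfl⟩ hab - hbc
    exact d1_binaryComb_ne_add hx hinj hanti (ne_of_apply_ne _ hab) (ne_of_apply_ne _ hbc)
end

section
/- For every positive integer n, every set U ⊆ ℤ^n of cardinality 2^(2^(n-1)) + 1 contains three pairwise distinct points u, v, w such that for every coordinate i ∈ {1,…,n} the sequence (u_i, v_i, w_i) is monotone (i.e., u_i ≤ v_i ≤ w_i or u_i ≥ v_i ≥ w_i). -/
/-!
Sort the points lexicographically; along this order the first coordinate is automatically
monotone. Each of the remaining `n - 1` coordinates costs one application of Erdős–Szekeres,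
which turns a chain of more than `m²` points into a subchain of more than `m` points on which
that coordinate is monotone or antitone. As `(2 ^ 2 ^ k) ^ 2 = 2 ^ 2 ^ (k + 1)`, the
`2 ^ 2 ^ (n - 1) + 1` points leave at least three after `n - 1` rounds.
-/

open Finset

section

variable {P α : Type*} [LinearOrder P] [LinearOrder α]

theorem Finset.exists_lt_lt_of_two_lt_card {s : Finset P} (hs : 2 < #s) :
    ∃ a ∈ s, ∃ b ∈ s, ∃ c ∈ s, a < b ∧ b < c := by
  let e := s.orderEmbOfFin rfl
  exact ⟨e ⟨0, by omega⟩, s.orderEmbOfFin_mem rfl _, e ⟨1, hs.trans' one_lt_two⟩,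
    s.orderEmbOfFin_mem rfl _, e ⟨2, hs⟩, s.orderEmbOfFin_mem rfl _,
    e.strictMono (by simp [Fin.lt_def]), e.strictMono (by simp [Fin.lt_def])⟩

section ErdosSzekeres

variable (c : P → α) (s : Finset P)

open Classical in
noncomputable def monotoneRunsEndingAt (x : P) : Finset (Finset P) :=
  s.powerset.filter fun t => x ∈ t ∧ (∀ y ∈ t, y ≤ x) ∧ MonotoneOn c t

noncomputable def longestMonotoneRunEndingAt (x : P) : ℕ :=
  (monotoneRunsEndingAt c s x).sup card

variable {c s}

lemma mem_monotoneRunsEndingAt {x : P} {t : Finset P} :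
    t ∈ monotoneRunsEndingAt c s x ↔
      t ⊆ s ∧ x ∈ t ∧ (∀ y ∈ t, y ≤ x) ∧ MonotoneOn c t := by
  classical
  simp [monotoneRunsEndingAt]

lemma singleton_mem_monotoneRunsEndingAt {x : P} (hx : x ∈ s) :
    {x} ∈ monotoneRunsEndingAt c s x := by
  simp [mem_monotoneRunsEndingAt, hx]

lemma exists_mem_monotoneRunsEndingAt_card_eq {x : P} (hx : x ∈ s) :
    ∃ t ∈ monotoneRunsEndingAt c s x, #t = longestMonotoneRunEndingAt c s x :=
  (exists_mem_eq_sup _ ⟨_, singleton_mem_monotoneRunsEndingAt hx⟩ card).imp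
    fun _ ⟨ht, h⟩ => ⟨ht, h.symm⟩

lemma one_le_longestMonotoneRunEndingAt {x : P} (hx : x ∈ s) :
    1 ≤ longestMonotoneRunEndingAt c s x :=
  le_sup (f := card) (singleton_mem_monotoneRunsEndingAt hx)

lemma longestMonotoneRunEndingAt_lt {x y : P} (hx : x ∈ s) (hy : y ∈ s) (hxy : x < y)
    (hc : c x ≤ c y) :
    longestMonotoneRunEndingAt c s x < longestMonotoneRunEndingAt c s y := by
  obtain ⟨t, ht, hcard⟩ := exists_mem_monotoneRunsEndingAt_card_eq (c := c) hx
  rw [mem_monotoneRunsEndingAt] at ht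
  obtain ⟨hts, hxt, hle, hmono⟩ := ht
  have hyt : y ∉ t := fun hyt => (hle y hyt).not_gt hxy
  have hrun : insert y t ∈ monotoneRunsEndingAt c s y := by
    refine mem_monotoneRunsEndingAt.2 ⟨insert_subset hy hts, mem_insert_self y t, ?_, ?_⟩
    · simpa using fun z hz => (hle z hz).trans hxy.le
    · rw [coe_insert, Set.monotoneOn_insert_iff]
      refine ⟨fun z hz _ => (hmono hz hxt (hle z hz)).trans hc,
        fun z hz hyz => absurd ((hle z hz).trans_lt hxy) hyz.not_gt, hmono⟩
  calc longestMonotoneRunEndingAt c s x < #(insert y t) := by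
        rw [card_insert_of_notMem hyt, hcard]; omega
    _ ≤ _ := le_sup (f := card) hrun

/-- If every monotone run has at most `m` points, the lengths of the longest runs ending at the
points of `s` take at most `m` values, and points sharing a value form an antitone run. -/
theorem exists_subset_lt_card_monotoneOn_or_antitoneOn {m : ℕ} (hs : m * m < #s) :
    ∃ t ⊆ s, m < #t ∧ (MonotoneOn c t ∨ AntitoneOn c t) := by
  classical
  by_cases hlong : ∃ x ∈ s, m < longestMonotoneRunEndingAt c s x
  · obtain ⟨x, hx, hm⟩ := hlong
    obtain ⟨t, ht, hcard⟩ := exists_mem_monotoneRunsEndingAt_card_eq (c := c) hx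
    obtain ⟨hts, -, -, hmono⟩ := mem_monotoneRunsEndingAt.1 ht
    exact ⟨t, hts, hcard ▸ hm, Or.inl hmono⟩
  push Not at hlong
  have hmaps : ∀ x ∈ s, longestMonotoneRunEndingAt c s x ∈ Icc 1 m := fun x hx =>
    mem_Icc.2 ⟨one_le_longestMonotoneRunEndingAt hx, hlong x hx⟩
  obtain ⟨k, -, hk⟩ := exists_lt_card_fiber_of_mul_lt_card_of_maps_to hmaps
    (by rwa [Nat.card_Icc, Nat.add_sub_cancel])
  refine ⟨_, filter_subset _ s, hk, Or.inr fun x hx y hy hxy => ?_⟩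
  simp only [coe_filter, Set.mem_ofPred_eq] at hx hy
  rcases hxy.eq_or_lt with rfl | hxy
  · rfl
  · by_contra! hc
    exact (longestMonotoneRunEndingAt_lt hx.1 hy.1 hxy hc.le).ne (hx.2.trans hy.2.symm)

end ErdosSzekeres

theorem exists_subset_two_lt_card_forall_monotoneOn_or_antitoneOn {ι : Type*}
    (f : ι → P → α) (I : Finset ι) (s : Finset P) (hs : 2 ^ 2 ^ #I < #s) :
    ∃ t ⊆ s, 2 < #t ∧ ∀ i ∈ I, MonotoneOn (f i) t ∨ AntitoneOn (f i) t := by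
  classical
  induction I using Finset.induction_on generalizing s with
  | empty => exact ⟨s, subset_rfl, by simpa using hs, by simp⟩
  | insert a I ha ih =>
    have hsq : 2 ^ 2 ^ #I * 2 ^ 2 ^ #I < #s := by
      rwa [← pow_add, ← two_mul, ← pow_succ', ← card_insert_of_notMem ha]
    obtain ⟨t₁, ht₁s, ht₁, hmono₁⟩ :=
      exists_subset_lt_card_monotoneOn_or_antitoneOn (c := f a) hsq
    obtain ⟨t, htt₁, ht, hmono⟩ := ih t₁ ht₁
    refine ⟨t, htt₁.trans ht₁s, ht, (forall_mem_insert _ _ _).2 ⟨?_, hmono⟩⟩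
    exact hmono₁.imp (·.mono (coe_subset.2 htt₁)) (·.mono (coe_subset.2 htt₁))

end

/-- Every set of `2^(2^(n-1)) + 1` points of `ℤ^n` contains three pairwise
distinct points which are monotone in every coordinate (an iterated
Erdős–Szekeres argument). -/
theorem exists_coordinatewise_monotone_triple (n : ℕ) (hn : 0 < n)
    (U : Set (Fin n → ℤ)) (hU : U.encard = 2 ^ 2 ^ (n - 1) + 1) :
    ∃ u ∈ U, ∃ v ∈ U, ∃ w ∈ U, u ≠ v ∧ u ≠ w ∧ v ≠ w ∧
      ∀ i, (u i ≤ v i ∧ v i ≤ w i) ∨ (u i ≥ v i ∧ v i ≥ w i) := by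
  obtain ⟨m, rfl⟩ : ∃ m, n = m + 1 := ⟨n - 1, by omega⟩
  have hfin : U.Finite := Set.finite_of_encard_eq_coe (k := 2 ^ 2 ^ m + 1) (by simpa using hU)
  let s : Finset (Lex (Fin (m + 1) → ℤ)) := hfin.toFinset.map toLex.toEmbedding
  have hcard : #hfin.toFinset = 2 ^ 2 ^ m + 1 := by
    rw [hfin.encard_eq_coe_toFinset_card, Nat.add_sub_cancel] at hU
    exact_mod_cast hU
  have hs : 2 ^ 2 ^ #(univ : Finset (Fin m)) < #s := by simp [s, hcard]
  obtain ⟨t, hts, ht, hmono⟩ :=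
    exists_subset_two_lt_card_forall_monotoneOn_or_antitoneOn
      (fun i (x : Lex (Fin (m + 1) → ℤ)) => ofLex x i.succ) univ s hs
  obtain ⟨u, hu, v, hv, w, hw, huv, hvw⟩ := exists_lt_lt_of_two_lt_card ht
  have hmem : ∀ x ∈ t, ofLex x ∈ U := fun x hx => by simpa [s] using hts hx
  refine ⟨ofLex u, hmem u hu, ofLex v, hmem v hv, ofLex w, hmem w hw, huv.ne, (huv.trans hvw).ne,
    hvw.ne, fun i => ?_⟩
  cases i using Fin.cases with
  | zero =>
    exact Or.inl ⟨Pi.apply_le_of_toLex huv.le (by simp), Pi.apply_le_of_toLex hvw.le (by simp)⟩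
  | succ i =>
    rcases hmono i (mem_univ i) with h | h
    · exact Or.inl ⟨h hu hv huv.le, h hv hw hvw.le⟩
    · exact Or.inr ⟨h hu hv huv.le, h hv hw hvw.le⟩
end

section
/- Claim A: Let n ≥ 3 and let X^(n) = {x_1^(n), …, x_{2^(2^(n-1))}^(n)} ⊆ ℤ^n be the recursively constructed set (see context). If indices i, j ∈ {1,…,2^(2^(n-1))} lie in the same block, i.e., i = p·2^(2^(n-2)) + r_i and j = p·2^(2^(n-2)) + r_j with the same 0 ≤ p < 2^(2^(n-2)) and r_i, r_j ∈ {1,…,2^(2^(n-2))}, then x^(n)_{i,n-1} < x^(n)_{j,n-1} if and only if x^(n)_{i,n} > x^(n)_{j,n}. -/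
/-- `gridX n i j` is the `j`-th coordinate `x^(n)_{i,j}` (coordinates indexed
`1,…,n`) of the `i`-th point (indices `1,…,2^(2^(n-1))`) of the recursively
constructed general position set `X^(n) ⊆ ℤ^n`.

For `n = 2`: `x^(2)_1 = (1,2)`, `x^(2)_2 = (2,1)`, `x^(2)_3 = (3,4)`,
`x^(2)_4 = (4,3)`.

For `n ≥ 3`, writing `i = p·2^(2^(n-2)) + r` with `0 ≤ p < 2^(2^(n-2))` and
`1 ≤ r ≤ 2^(2^(n-2))`:
`x^(n)_{i,1} = i`;
`x^(n)_{i,j} = (x^(n-1)_{p+1,j} − 1)·2^(2^(n-2)) + x^(n-1)_{r,j}` for `2 ≤ j ≤ n−1`;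
`x^(n)_{i,n} = x^(n-1)_{p+1,n-1}·2^(2^(n-2)) − x^(n-1)_{r,n-1} + 1`. -/
def gridX : ℕ → ℕ → ℕ → ℤ
  | 0, _, _ => 0
  | 1, i, _ => (i : ℤ)
  | 2, i, j =>
      if j = 2 then (if i % 2 = 1 then (i : ℤ) + 1 else (i : ℤ) - 1) else (i : ℤ)
  | (n + 3), i, j =>
      let m : ℕ := 2 ^ 2 ^ (n + 1)
      let p : ℕ := (i - 1) / m
      let r : ℕ := (i - 1) % m + 1
      if j = 1 then (i : ℤ)
      else if j = n + 3 then
        gridX (n + 2) (p + 1) (n + 2) * (m : ℤ) - gridX (n + 2) r (n + 2) + 1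
      else
        (gridX (n + 2) (p + 1) j - 1) * (m : ℤ) + gridX (n + 2) r j

/-- Claim A: for `n ≥ 3`, if the indices `i` and `j` lie in the same block,
then `x^(n)_{i,n-1} < x^(n)_{j,n-1}` if and only if `x^(n)_{i,n} > x^(n)_{j,n}`. -/
theorem claimA (n : ℕ) (hn : 3 ≤ n) (p ri rj : ℕ)
    (hp : p < 2 ^ 2 ^ (n - 2)) (hri : 1 ≤ ri) (hri' : ri ≤ 2 ^ 2 ^ (n - 2))
    (hrj : 1 ≤ rj) (hrj' : rj ≤ 2 ^ 2 ^ (n - 2))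
    (i j : ℕ) (hi : i = p * 2 ^ 2 ^ (n - 2) + ri) (hj : j = p * 2 ^ 2 ^ (n - 2) + rj) :
    gridX n i (n - 1) < gridX n j (n - 1) ↔ gridX n j n < gridX n i n := by
  obtain ⟨m, rfl⟩ : ∃ m, n = m + 3 := ⟨n - 3, by omega⟩
  set M : ℕ := 2 ^ 2 ^ (m + 1) with hM
  have hMn : m + 3 - 2 = m + 1 := rfl
  rw [hMn, ← hM] at hp hri' hrj' hi hj
  have hM1 : 1 ≤ M := Nat.one_le_two_pow
  have hdivi : (i - 1) / M = p := by
    rw [show i - 1 = (ri - 1) + p * M by omega, Nat.add_mul_div_right _ _ (by omega),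
      Nat.div_eq_of_lt (by omega), Nat.zero_add]
  have hmodi : (i - 1) % M = ri - 1 := by
    rw [show i - 1 = (ri - 1) + p * M by omega, Nat.add_mul_mod_self_right,
      Nat.mod_eq_of_lt (by omega)]
  have hdivj : (j - 1) / M = p := by
    rw [show j - 1 = (rj - 1) + p * M by omega, Nat.add_mul_div_right _ _ (by omega),
      Nat.div_eq_of_lt (by omega), Nat.zero_add]
  have hmodj : (j - 1) % M = rj - 1 := by
    rw [show j - 1 = (rj - 1) + p * M by omega, Nat.add_mul_mod_self_right,
      Nat.mod_eq_of_lt (by omega)]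
  have hri1 : ri - 1 + 1 = ri := by omega
  have hrj1 : rj - 1 + 1 = rj := by omega
  show gridX (m + 3) i (m + 2) < gridX (m + 3) j (m + 2) ↔
    gridX (m + 3) j (m + 3) < gridX (m + 3) i (m + 3)
  rw [gridX, gridX, gridX, gridX]
  simp only [← hM, hdivi, hmodi, hdivj, hmodj, hri1, hrj1,
    if_neg (by omega : ¬ m + 2 = 1), if_neg (by omega : ¬ m + 2 = m + 3),
    if_neg (by omega : ¬ m + 3 = 1), if_pos rfl, if_true]
  constructor <;> intro h <;> linarith
end

section
/- Let n ≥ 2 and let i_1, …, i_n be integers with each i_j ≥ 2^(2^(n-1)+1). Then the general position number of the torus C_{i_1} □ ⋯ □ C_{i_n} is at least 2^(2^(n-1)): there exists a set S of 2^(2^(n-1)) vertices of C_{i_1} □ ⋯ □ C_{i_n} such that no three pairwise distinct u, v, w ∈ S satisfy d(u,w) = d(u,v) + d(v,w), where d is the graph distance of the torus. -/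
/-- The graph distance on the cycle `C_m` with vertex set `ℤ/mℤ`:
`d(a,b) = min(c, m − c)` where `c ∈ {0,…,m−1}` represents `a − b`. -/
def cycleDist {m : ℕ} (a b : ZMod m) : ℕ := min (a - b).val (m - (a - b).val)

/-- The graph distance on the torus `C_{i_1} □ ⋯ □ C_{i_n}`: the sum of the
cycle distances in the coordinates. -/
def torusDist {n : ℕ} {i : Fin n → ℕ} (u v : (j : Fin n) → ZMod (i j)) : ℕ :=
  ∑ j, cycleDist (u j) (v j)

/-!
Put `K = 2 ^ (n - 1)` and send `x < 2 ^ K` to the point whose `j`-th coordinate is `x XOR c_j`,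
where bit `t` of the mask `c_j = bitColumn K j` is bit `j` of `t`; in particular `c_{n-1} = 0`.
All coordinates are below `2 ^ K ≤ i_j / 2`, so torus distances are `ℓ¹` distances of these
natural numbers, and it suffices that for distinct `x, y, z` some coordinate puts `y` strictly
above or strictly below both `x` and `z`. The order of `x XOR c` and `y XOR c` is decided by the
top bit `s` where `x` and `y` differ: `x XOR c < y XOR c` iff bit `s` of `y XOR c` is set. With
`s₁`, `s₂` the top bits where `y` differs from `x` and from `z`, we need a mask whose bits at `s₁`
and `s₂` agree or differ exactly as those of `y` do: `c_{n-1}` serves in the first case, and in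
the second `s₁ ≠ s₂` differ in some bit `j < n - 1`, so `c_j` serves.
-/

open Finset

namespace Nat

theorem testBit_sum_two_pow (s : Finset ℕ) (a : ℕ) :
    (∑ i ∈ s, 2 ^ i).testBit a = decide (a ∈ s) := by
  rw [Bool.eq_iff_iff, ← mem_bitIndices, ← List.mem_toFinset,
    Finset.toFinset_bitIndices_sum_two_pow, decide_eq_true_iff]

theorem exists_most_significant_testBit_ne {x y : ℕ} (h : x ≠ y) :
    ∃ s, x.testBit s ≠ y.testBit s ∧ ∀ t, s < t → x.testBit t = y.testBit t := by
  have hxor : x ^^^ y ≠ 0 := by rwa [Ne, ← xor_self y, xor_left_inj]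
  obtain ⟨s, hs, habove⟩ := exists_most_significant_bit hxor
  refine ⟨s, by simpa [testBit_xor] using hs, fun t ht => ?_⟩
  simpa [testBit_xor] using habove t ht

theorem lt_of_testBit_ne_of_lt_two_pow {x y s K : ℕ} (hx : x < 2 ^ K) (hy : y < 2 ^ K)
    (h : x.testBit s ≠ y.testBit s) : s < K := by
  by_contra! hKs
  have hpow : 2 ^ K ≤ 2 ^ s := Nat.pow_le_pow_right two_pos hKs
  exact h <| by rw [testBit_lt_two_pow (hx.trans_le hpow), testBit_lt_two_pow (hy.trans_le hpow)]

theorem lt_iff_testBit_of_testBit_ne {x y s : ℕ} (hs : x.testBit s ≠ y.testBit s)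
    (habove : ∀ t, s < t → x.testBit t = y.testBit t) : x < y ↔ y.testBit s = true := by
  constructor
  · intro hlt
    by_contra hys
    have := lt_of_testBit s (by simpa using hys) (by simpa [hys] using hs.symm)
      (fun t ht => (habove t ht).symm)
    omega
  · intro hys
    exact lt_of_testBit s (by simpa [hys] using hs) hys habove

theorem xor_lt_xor_iff {x y m s : ℕ} (hs : x.testBit s ≠ y.testBit s)
    (habove : ∀ t, s < t → x.testBit t = y.testBit t) :
    x ^^^ m < y ^^^ m ↔ (y ^^^ m).testBit s = true :=
  lt_iff_testBit_of_testBit_ne (by simpa [testBit_xor] using hs)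
    (fun t ht => by simp [testBit_xor, habove t ht])

theorem dist_lt_dist_add_dist {a b c : ℕ} (hab : a ≠ b) (hcb : c ≠ b) (h : a < b ↔ c < b) :
    a.dist c < a.dist b + b.dist c := by
  simp only [Nat.dist]
  omega

end Nat

theorem exists_xor_lt_iff_xor_lt {ι : Type*} {K : ℕ} {M : ι → ℕ}
    (hagree : ∀ s₁ < K, ∀ s₂ < K, ∃ j, (M j).testBit s₁ = (M j).testBit s₂)
    (hsep : ∀ s₁ < K, ∀ s₂ < K, s₁ ≠ s₂ → ∃ j, (M j).testBit s₁ ≠ (M j).testBit s₂)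
    {x y z : ℕ} (hx : x < 2 ^ K) (hy : y < 2 ^ K) (hz : z < 2 ^ K) (hxy : x ≠ y) (hzy : z ≠ y) :
    ∃ j, (x ^^^ M j < y ^^^ M j ↔ z ^^^ M j < y ^^^ M j) := by
  obtain ⟨s₁, hs₁, habove₁⟩ := Nat.exists_most_significant_testBit_ne hxy
  obtain ⟨s₂, hs₂, habove₂⟩ := Nat.exists_most_significant_testBit_ne hzy
  have hs₁K := Nat.lt_of_testBit_ne_of_lt_two_pow hx hy hs₁
  have hs₂K := Nat.lt_of_testBit_ne_of_lt_two_pow hz hy hs₂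
  suffices ∃ j, (y ^^^ M j).testBit s₁ = (y ^^^ M j).testBit s₂ by
    obtain ⟨j, hj⟩ := this
    exact ⟨j, by rw [Nat.xor_lt_xor_iff hs₁ habove₁, Nat.xor_lt_xor_iff hs₂ habove₂, hj]⟩
  simp only [Nat.testBit_xor]
  by_cases hy : y.testBit s₁ = y.testBit s₂
  · obtain ⟨j, hj⟩ := hagree s₁ hs₁K s₂ hs₂K
    exact ⟨j, by rw [hy, hj]⟩
  · obtain ⟨j, hj⟩ := hsep s₁ hs₁K s₂ hs₂K (by rintro rfl; exact hy rfl)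
    exact ⟨j, by revert hy hj; cases y.testBit s₁ <;> cases y.testBit s₂ <;>
      cases (M j).testBit s₁ <;> cases (M j).testBit s₂ <;> decide⟩

def bitColumn (K j : ℕ) : ℕ := ∑ t ∈ (range K).filter (·.testBit j), 2 ^ t

theorem testBit_bitColumn (K j t : ℕ) :
    (bitColumn K j).testBit t = (decide (t < K) && t.testBit j) := by
  simp [bitColumn, Nat.testBit_sum_two_pow]

theorem bitColumn_lt_two_pow (K j : ℕ) : bitColumn K j < 2 ^ K :=
  Nat.lt_pow_two_of_testBit _ fun t ht => by simp [testBit_bitColumn]; omega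

theorem bitColumn_two_pow_self (m : ℕ) : bitColumn (2 ^ m) m = 0 :=
  Nat.eq_of_testBit_eq fun t => by
    simpa [testBit_bitColumn] using fun ht => Nat.testBit_lt_two_pow ht

theorem exists_testBit_bitColumn_ne {m s₁ s₂ : ℕ} (hs₁ : s₁ < 2 ^ m) (hs₂ : s₂ < 2 ^ m)
    (h : s₁ ≠ s₂) :
    ∃ j < m, (bitColumn (2 ^ m) j).testBit s₁ ≠ (bitColumn (2 ^ m) j).testBit s₂ := by
  obtain ⟨j, hj⟩ := Nat.exists_testBit_ne_of_ne h
  exact ⟨j, Nat.lt_of_testBit_ne_of_lt_two_pow hs₁ hs₂ hj, by simpa [testBit_bitColumn, hs₁, hs₂]⟩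

def xorPoint (n x : ℕ) (j : Fin n) : ℕ := x ^^^ bitColumn (2 ^ (n - 1)) j

theorem xorPoint_lt {n x : ℕ} (hx : x < 2 ^ 2 ^ (n - 1)) (j : Fin n) :
    xorPoint n x j < 2 ^ 2 ^ (n - 1) :=
  Nat.xor_lt_two_pow hx (bitColumn_lt_two_pow _ j)

theorem xorPoint_injective {n : ℕ} (hn : n ≠ 0) : Function.Injective (xorPoint n) :=
  fun _ _ h => Nat.xor_left_inj.mp (congrFun h ⟨0, by omega⟩)

theorem exists_dist_xorPoint_lt {n : ℕ} (hn : n ≠ 0) {x y z : ℕ}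
    (hx : x < 2 ^ 2 ^ (n - 1)) (hy : y < 2 ^ 2 ^ (n - 1)) (hz : z < 2 ^ 2 ^ (n - 1))
    (hxy : x ≠ y) (hyz : y ≠ z) :
    ∃ j, (xorPoint n x j).dist (xorPoint n z j) <
      (xorPoint n x j).dist (xorPoint n y j) + (xorPoint n y j).dist (xorPoint n z j) := by
  obtain ⟨j, hj⟩ := exists_xor_lt_iff_xor_lt (M := fun j : Fin n => bitColumn (2 ^ (n - 1)) j)
    (fun _ _ _ _ => ⟨⟨n - 1, by omega⟩, by simp [bitColumn_two_pow_self]⟩)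
    (fun s₁ hs₁ s₂ hs₂ h => by
      obtain ⟨j, hj, hne⟩ := exists_testBit_bitColumn_ne hs₁ hs₂ h
      exact ⟨⟨j, by omega⟩, hne⟩)
    hx hy hz hxy hyz.symm
  exact ⟨j, Nat.dist_lt_dist_add_dist (fun h => hxy (Nat.xor_left_inj.mp h))
    (fun h => hyz (Nat.xor_left_inj.mp h).symm) hj⟩

theorem cycleDist_natCast {m a b : ℕ} (ha : a < m) (hb : b < m) (h : 2 * a.dist b ≤ m) :
    cycleDist (a : ZMod m) b = a.dist b := by
  have : NeZero m := ⟨by omega⟩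
  unfold cycleDist
  rcases le_or_gt b a with hba | hab
  · rw [← Nat.cast_sub hba, ZMod.val_natCast_of_lt (by omega), Nat.dist_eq_sub_of_le_right hba]
    rw [Nat.dist_eq_sub_of_le_right hba] at h
    omega
  · have hcast : ((m - (b - a) : ℕ) : ZMod m) = a - b := by
      rw [Nat.cast_sub (by omega), Nat.cast_sub hab.le, ZMod.natCast_self]
      ring
    rw [← hcast, ZMod.val_natCast_of_lt (by omega), Nat.dist_eq_sub_of_le hab.le]
    rw [Nat.dist_eq_sub_of_le hab.le] at h
    omega

theorem torusDist_natCast {n L : ℕ} {i : Fin n → ℕ} (hi : ∀ j, 2 * L ≤ i j)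
    {u v : Fin n → ℕ} (hu : ∀ j, u j < L) (hv : ∀ j, v j < L) :
    torusDist (fun j => (u j : ZMod (i j))) (fun j => (v j : ZMod (i j))) =
      ∑ j, (u j).dist (v j) := by
  refine sum_congr rfl fun j _ => cycleDist_natCast (by linarith [hu j, hi j])
    (by linarith [hv j, hi j]) ?_
  have := hi j; have := hu j; have := hv j
  simp only [Nat.dist]
  omega

theorem exists_torus_generalPosition_of_grid {n L : ℕ} {i : Fin n → ℕ} (hi : ∀ j, 2 * L ≤ i j)
    (P : Finset (Fin n → ℕ)) (hP : ∀ p ∈ P, ∀ j, p j < L)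
    (hgp : ∀ u ∈ P, ∀ v ∈ P, ∀ w ∈ P, u ≠ v → v ≠ w →
      ∃ j, (u j).dist (w j) < (u j).dist (v j) + (v j).dist (w j)) :
    ∃ S : Set ((j : Fin n) → ZMod (i j)),
      S.encard = #P ∧
      ∀ u ∈ S, ∀ v ∈ S, ∀ w ∈ S, u ≠ v → u ≠ w → v ≠ w →
        torusDist u w ≠ torusDist u v + torusDist v w := by
  classical
  set toTorus : (Fin n → ℕ) → ((j : Fin n) → ZMod (i j)) := fun p j => (p j : ZMod (i j))
  have hinj : Set.InjOn toTorus P := by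
    intro p hp q hq hpq
    funext j
    have := congrFun hpq j
    have hL := hi j
    rwa [ZMod.natCast_eq_natCast_iff', Nat.mod_eq_of_lt (by linarith [hP p hp j]),
      Nat.mod_eq_of_lt (by linarith [hP q hq j])] at this
  refine ⟨P.image toTorus, by rw [Set.encard_coe_eq_coe_finsetCard, card_image_of_injOn hinj], ?_⟩
  simp only [coe_image, Set.mem_image, mem_coe]
  rintro _ ⟨u, hu, rfl⟩ _ ⟨v, hv, rfl⟩ _ ⟨w, hw, rfl⟩ huv - hvw
  obtain ⟨j, hj⟩ := hgp u hu v hv w hw (by rintro rfl; exact huv rfl) (by rintro rfl; exact hvw rfl)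
  rw [torusDist_natCast hi (hP u hu) (hP w hw), torusDist_natCast hi (hP u hu) (hP v hv),
    torusDist_natCast hi (hP v hv) (hP w hw), ← sum_add_distrib]
  exact (sum_lt_sum (fun k _ => Nat.dist.triangle_inequality _ _ _) ⟨j, mem_univ j, hj⟩).ne

/-- If `n ≥ 2` and all `i_j ≥ 2^(2^(n-1)+1)`, then the torus
`C_{i_1} □ ⋯ □ C_{i_n}` has a general position set of cardinality
`2^(2^(n-1))`; in particular its general position number is at least
`2^(2^(n-1))`. -/
theorem gp_lower_bound_of_torus (n : ℕ) (hn : 2 ≤ n) (i : Fin n → ℕ)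
    (hi : ∀ j, 2 ^ (2 ^ (n - 1) + 1) ≤ i j) :
    ∃ S : Set ((j : Fin n) → ZMod (i j)),
      S.encard = 2 ^ 2 ^ (n - 1) ∧
      ∀ u ∈ S, ∀ v ∈ S, ∀ w ∈ S, u ≠ v → u ≠ w → v ≠ w →
        torusDist u w ≠ torusDist u v + torusDist v w := by
  obtain ⟨S, hcard, hS⟩ := exists_torus_generalPosition_of_grid (i := i) (L := 2 ^ 2 ^ (n - 1))
    (fun j => by rw [← pow_succ']; exact hi j) ((range (2 ^ 2 ^ (n - 1))).image (xorPoint n))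
    (by simpa using fun x hx => xorPoint_lt hx) (by
      simp only [mem_image, mem_range]
      rintro _ ⟨x, hx, rfl⟩ _ ⟨y, hy, rfl⟩ _ ⟨z, hz, rfl⟩ hxy hyz
      exact exists_dist_xorPoint_lt (by omega) hx hy hz (ne_of_apply_ne _ hxy)
        (ne_of_apply_ne _ hyz))
  refine ⟨S, ?_, hS⟩
  rw [hcard, card_image_of_injective _ (xorPoint_injective (by omega)), card_range]
  norm_cast
end

section
/- For every integer M there exist finite connected graphs G and H such that gp(G □ H) − (gp(G) + gp(H) − 2) ≥ M; in particular the difference in the known inequality gp(G □ H) ≥ gp(G) + gp(H) − 2 can be arbitrarily large. (Concretely, for n ≥ 3 one may take G = P_{i_1} □ ⋯ □ P_{i_{n-1}} with all i_j ≥ 2^(2^(n-1)) and H a path on at least 2^(2^(n-1)) vertices, so that gp(G □ H) = 2^(2^(n-1)), gp(G) = 2^(2^(n-2)), and gp(H) = 2.) -/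
/-!
Distances in the grid `P_k □ ⋯ □ P_k` with `d` factors are ℓ¹ distances of coordinates, so three
vertices lie on a common geodesic exactly when one of them lies in the box spanned by the other two:
general position sets are the box-free sets of `[k]^d`.

Upper bound: for each of the `2^(d-1)` sign patterns up to global sign, the coordinatewise order
twisted by that pattern has no chain of length three in a box-free set, and any two points are
comparable in one of these orders. Splitting off the elements without predecessor one order at a
time, a box-free set has at most `2^(2^(d-1))` points.

Lower bound: index points by Boolean functions `x` on the `2^(d-1)` sign patterns `σ` with first
sign `+`, and let the `c`-th coordinate of `x` be the lexicographic rank of `x` flipped by the mask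
`σ ↦ σ c`. Any two points compare in every coordinate according to the first position where they
differ, and this rules out a point in the box of two others.

With `G = P_k^(d-1)`, `H = P_k` and `k = 2^(2^(d-1))` we get `gp(G □ H) ≥ A^2` while
`gp(G) + gp(H) - 2 ≤ A` for `A = 2^(2^(d-2))`.
-/

/-- `S` is a general position set of the graph `G`: no three pairwise distinct
vertices of `S` lie on a common geodesic. -/
def IsGPSetOf {V : Type} (G : SimpleGraph V) (S : Finset V) : Prop :=
  ∀ u ∈ S, ∀ v ∈ S, ∀ w ∈ S, u ≠ v → u ≠ w → v ≠ w →
    G.dist u w ≠ G.dist u v + G.dist v w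

/-- The general position number of a graph `G`: the largest cardinality of a
general position set of `G`. -/
noncomputable def gpNum {V : Type} (G : SimpleGraph V) : ℕ :=
  sSup {k : ℕ | ∃ S : Finset V, S.card = k ∧ IsGPSetOf G S}

open Finset Function

namespace SimpleGraph

lemma pathGraph_natDist_le_length {k : ℕ} {u v : Fin k} (w : (pathGraph k).Walk u v) :
    Nat.dist u v ≤ w.length := by
  induction w with
  | nil => simp [Nat.dist_self]
  | cons h _ ih =>
    rw [pathGraph_adj] at h
    rw [Walk.length_cons]
    unfold Nat.dist at *
    omega

lemma pathGraph_dist_le_of_add_eq {k : ℕ} {u v : Fin k} {j : ℕ} (h : u.val + j = v.val) :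
    (pathGraph k).dist u v ≤ j := by
  induction j generalizing v with
  | zero => simp [show u = v from Fin.ext (by omega)]
  | succ j ih =>
    let w : Fin k := ⟨u + j, by omega⟩
    have hwv : (pathGraph k).Adj w v := pathGraph_adj.mpr (Or.inl (by simp [w]; omega))
    calc (pathGraph k).dist u v ≤ (pathGraph k).dist u w + (pathGraph k).dist w v :=
          (pathGraph_preconnected k w v).dist_triangle_right u
      _ ≤ j + 1 := add_le_add (ih rfl) (dist_eq_one_iff_adj.mpr hwv).le

theorem pathGraph_dist {k : ℕ} (u v : Fin k) : (pathGraph k).dist u v = Nat.dist u v := by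
  obtain ⟨w, hw⟩ := (pathGraph_preconnected k u v).exists_walk_length_eq_dist
  refine le_antisymm ?_ (hw ▸ pathGraph_natDist_le_length w)
  rcases le_total u v with h | h
  · exact pathGraph_dist_le_of_add_eq (by unfold Nat.dist; omega)
  · rw [dist_comm, Nat.dist_comm]
    exact pathGraph_dist_le_of_add_eq (by unfold Nat.dist; omega)

theorem dist_boxProd {α β : Type*} {G : SimpleGraph α} {H : SimpleGraph β} {x y : α × β}
    (hG : G.Reachable x.1 y.1) (hH : H.Reachable x.2 y.2) :
    (G □ H).dist x y = G.dist x.1 y.1 + H.dist x.2 y.2 := by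
  rw [dist, dist, dist, edist_boxProd]
  exact ENat.toNat_add (edist_ne_top_iff_reachable.mpr hG) (edist_ne_top_iff_reachable.mpr hH)

end SimpleGraph

def IsGridEquiv {V : Type*} (G : SimpleGraph V) {n k : ℕ} (e : V ≃ (Fin n → Fin k)) : Prop :=
  ∀ u v, G.dist u v = ∑ i, Nat.dist (e u i) (e v i)

lemma Nat.dist_eq_add_iff_mem_uIcc {a b c : ℕ} :
    Nat.dist a c = Nat.dist a b + Nat.dist b c ↔ b ∈ Set.uIcc a c := by
  rw [Set.mem_uIcc]
  unfold Nat.dist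
  omega

theorem isGridEquiv_pathGraph (k : ℕ) :
    IsGridEquiv (SimpleGraph.pathGraph k) (Equiv.funUnique (Fin 1) (Fin k)).symm := by
  intro u v
  simp [SimpleGraph.pathGraph_dist]

namespace IsGridEquiv

variable {V : Type*} {G : SimpleGraph V} {n k : ℕ} {e : V ≃ (Fin n → Fin k)}

theorem connected [Nonempty V] (hG : IsGridEquiv G e) : G.Connected := by
  refine ⟨fun u v => ?_⟩
  by_cases huv : u = v
  · exact huv ▸ SimpleGraph.Reachable.refl u
  refine .of_dist_ne_zero fun h0 => huv (e.injective (funext fun i => Fin.ext ?_))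
  rw [hG, sum_eq_zero_iff] at h0
  exact Nat.eq_of_dist_eq_zero (h0 i (mem_univ i))

theorem boxProd_pathGraph (hG : IsGridEquiv G e) :
    IsGridEquiv (G □ SimpleGraph.pathGraph k)
      ((Equiv.prodComm V (Fin k)).trans
        ((Equiv.prodCongr (Equiv.refl _) e).trans (Fin.snocEquiv fun _ => Fin k))) := by
  rintro ⟨u, a⟩ ⟨v, b⟩
  have : Nonempty V := ⟨u⟩
  rw [SimpleGraph.dist_boxProd (hG.connected.preconnected u v)
    (SimpleGraph.pathGraph_preconnected k a b), hG, SimpleGraph.pathGraph_dist,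
    Fin.sum_univ_castSucc]
  simp [Fin.snocEquiv]

theorem dist_eq_add_iff (hG : IsGridEquiv G e) {u v w : V} :
    G.dist u w = G.dist u v + G.dist v w ↔ ∀ i, e v i ∈ Set.uIcc (e u i) (e w i) := by
  rw [hG, hG, hG, ← sum_add_distrib,
    sum_eq_sum_iff_of_le fun i _ => Nat.dist.triangle_inequality _ _ _]
  simp only [mem_univ, true_implies, Nat.dist_eq_add_iff_mem_uIcc, Set.mem_uIcc,
    Fin.le_iff_val_le_val]

end IsGridEquiv

theorem exists_isGridEquiv (k n : ℕ) :
    ∃ (V : Type) (G : SimpleGraph V) (e : V ≃ (Fin (n + 1) → Fin k)), IsGridEquiv G e := by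
  induction n with
  | zero => exact ⟨_, _, _, isGridEquiv_pathGraph k⟩
  | succ n ih =>
    obtain ⟨V, G, e, hG⟩ := ih
    exact ⟨_, _, _, hG.boxProd_pathGraph⟩

def IsBoxFree {ι α : Type*} [LinearOrder α] (S : Finset (ι → α)) : Prop :=
  ∀ x ∈ S, ∀ y ∈ S, ∀ z ∈ S, x ≠ y → x ≠ z → y ≠ z → ¬ ∀ i, y i ∈ Set.uIcc (x i) (z i)

namespace IsGridEquiv

variable {V : Type} {G : SimpleGraph V} {n k : ℕ}

theorem isGPSetOf_iff {e : V ≃ (Fin n → Fin k)} (hG : IsGridEquiv G e) {S : Finset V} :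
    IsGPSetOf G S ↔ IsBoxFree (S.map e.toEmbedding) := by
  simp only [IsGPSetOf, IsBoxFree, forall_mem_map, Equiv.coe_toEmbedding, e.injective.ne_iff,
    ne_eq, hG.dist_eq_add_iff]

end IsGridEquiv

theorem Finset.card_le_two_pow_of_chainFree {α ι : Type*} (R : ι → α → α → Prop) (s : Finset ι)
    (S : Finset α) (hanti : ∀ i ∈ s, ∀ x y, R i x y → R i y x → x = y)
    (hchain : ∀ i ∈ s, ∀ x ∈ S, ∀ y ∈ S, ∀ z ∈ S, x ≠ y → x ≠ z → y ≠ z → R i x y → ¬ R i y z)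
    (hcomp : ∀ x ∈ S, ∀ y ∈ S, x ≠ y → ∃ i ∈ s, R i x y ∨ R i y x) :
    S.card ≤ 2 ^ s.card := by
  classical
  induction s using Finset.induction_on generalizing S with
  | empty =>
    refine card_le_one.mpr fun x hx y hy => by_contra fun hxy => ?_
    simpa using hcomp x hx y hy hxy
  | @insert i s hi ih =>
    -- Both the elements with an `R i`-predecessor in `S` and the others are `R i`-antichains.
    have hanti_sub : ∀ T ⊆ S, (∀ x ∈ T, ∀ y ∈ T, x ≠ y → ¬ R i x y) → T.card ≤ 2 ^ s.card := by
      intro T hTS hT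
      refine ih T (fun j hj => hanti j (mem_insert_of_mem hj))
        (fun j hj x hx y hy z hz =>
          hchain j (mem_insert_of_mem hj) x (hTS hx) y (hTS hy) z (hTS hz))
        fun x hx y hy hxy => ?_
      obtain ⟨j, hj, hR⟩ := hcomp x (hTS hx) y (hTS hy) hxy
      rcases mem_insert.mp hj with rfl | hj
      · exact (hR.elim (hT x hx y hy hxy) (hT y hy x hx (Ne.symm hxy))).elim
      · exact ⟨j, hj, hR⟩
    let P : α → Prop := fun x => ∃ y ∈ S, y ≠ x ∧ R i y x
    have h₁ : (S.filter P).card ≤ 2 ^ s.card := by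
      refine hanti_sub _ (filter_subset _ _) fun x hx y hy hxy hR => ?_
      obtain ⟨z, hz, hzx, hRz⟩ := (mem_filter.mp hx).2
      have hiS := mem_insert_self i s
      by_cases hzy : z = y
      · exact hxy (hanti i hiS x y hR (hzy ▸ hRz))
      · exact hchain i hiS z hz x (mem_filter.mp hx).1 y (mem_filter.mp hy).1 hzx hzy hxy hRz hR
    have h₂ : (S.filter fun x => ¬ P x).card ≤ 2 ^ s.card :=
      hanti_sub _ (filter_subset _ _) fun x hx y hy hxy hR =>
        (mem_filter.mp hy).2 ⟨x, (mem_filter.mp hx).1, hxy, hR⟩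
    rw [card_insert_of_notMem hi, pow_succ, ← card_filter_add_card_filter_not P]
    omega

def SignedLE {ι α : Type*} [LinearOrder α] (τ : ι → Bool) (x y : ι → α) : Prop :=
  ∀ i, if τ i then x i ≤ y i else y i ≤ x i

namespace SignedLE

variable {ι α : Type*} [LinearOrder α] {τ : ι → Bool} {x y z : ι → α}

theorem antisymm (hxy : SignedLE τ x y) (hyx : SignedLE τ y x) : x = y := by
  funext i
  have h₁ := hxy i
  have h₂ := hyx i
  split_ifs at h₁ h₂ <;> exact le_antisymm ‹_› ‹_›

theorem mem_uIcc (hxy : SignedLE τ x y) (hyz : SignedLE τ y z) (i : ι) :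
    y i ∈ Set.uIcc (x i) (z i) := by
  have h₁ := hxy i
  have h₂ := hyz i
  split_ifs at h₁ h₂
  · exact Set.mem_uIcc_of_le h₁ h₂
  · exact Set.mem_uIcc_of_ge h₂ h₁

theorem of_decide (x y : ι → α) : SignedLE (fun i => decide (x i ≤ y i)) x y := by
  intro i
  by_cases h : x i ≤ y i
  · simp [h]
  · simpa [h] using (not_le.mp h).le

end SignedLE

theorem IsBoxFree.card_le_two_pow_two_pow {α : Type*} [LinearOrder α] {n : ℕ}
    {S : Finset (Fin (n + 1) → α)} (hS : IsBoxFree S) : S.card ≤ 2 ^ 2 ^ n := by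
  -- Sign patterns `τ` and `!τ` give opposite relations, so it suffices to fix the first sign.
  have hcomp : ∀ x y : Fin (n + 1) → α, x 0 ≤ y 0 →
      SignedLE (Fin.cons true fun j => decide (x j.succ ≤ y j.succ)) x y := by
    intro x y h0 i
    induction i using Fin.cases with
    | zero => simpa using h0
    | succ j => simpa using SignedLE.of_decide x y j.succ
  simpa using Finset.card_le_two_pow_of_chainFree
    (fun τ : Fin n → Bool => SignedLE (Fin.cons true τ)) univ S
    (fun _ _ _ _ => SignedLE.antisymm)
    (fun _ _ x hx y hy z hz hxy hxz hyz h₁ h₂ => hS x hx y hy z hz hxy hxz hyz (h₁.mem_uIcc h₂))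
    fun x _ y _ _ => (le_total (x 0) (y 0)).elim
      (fun h => ⟨_, mem_univ _, Or.inl (hcomp x y h)⟩) fun h => ⟨_, mem_univ _, Or.inr (hcomp y x h)⟩

lemma Set.lt_iff_lt_of_mem_uIcc {α : Type*} [LinearOrder α] {a b c : α} (h : b ∈ Set.uIcc a c)
    (hab : a ≠ b) (hbc : b ≠ c) : a < b ↔ b < c := by
  rcases Set.mem_uIcc.mp h with ⟨h₁, h₂⟩ | ⟨h₁, h₂⟩
  · exact iff_of_true (lt_of_le_of_ne h₁ hab) (lt_of_le_of_ne h₂ hbc)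
  · exact iff_of_false (not_lt.mpr h₂) (not_lt.mpr h₁)

lemma Bool.xor_self_lt_xor_of_ne {a b : Bool} (h : a ≠ b) : xor a a < xor b a := by
  revert a b
  decide

lemma Bool.eq_of_eq_iff_eq {a b c : Bool} (h : a = b ↔ a = c) : b = c := by
  revert a b c
  decide

section MaskedLex

variable {ι : Type*}

def maskedLex (s x : ι → Bool) : Lex (ι → Bool) :=
  toLex fun p => xor (x p) (s p)

theorem maskedLex_injective (s : ι → Bool) : Injective (maskedLex s) :=
  fun _ _ h => funext fun p => Bool.xor_left_inj.mp (congrFun h p)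

theorem exists_forall_maskedLex_lt_iff [LinearOrder ι] [WellFoundedLT ι] {x y : ι → Bool}
    (h : x ≠ y) : ∃ P, x P ≠ y P ∧ ∀ s, maskedLex s x < maskedLex s y ↔ x P = s P := by
  obtain ⟨P, hP, hmin⟩ := wellFounded_lt.has_min {p | x p ≠ y p} (ne_iff.mp h)
  have hbelow : ∀ q < P, x q = y q := fun q hq => not_not.mp fun hq' => hmin q hq' hq
  have hlt : ∀ {x y : ι → Bool} (s), (∀ q < P, x q = y q) → x P ≠ y P → x P = s P →
      maskedLex s x < maskedLex s y := fun s hb hne hs =>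
    ⟨P, fun q hq => by simp [maskedLex, hb q hq], by
      simpa [maskedLex, ← hs] using Bool.xor_self_lt_xor_of_ne hne⟩
  refine ⟨P, hP, fun s => ⟨fun hxy => by_contra fun hs => ?_, hlt s hbelow hP⟩⟩
  exact (hlt s (fun q hq => (hbelow q hq).symm) (Ne.symm hP)
    ((Bool.eq_not_iff.mpr (Ne.symm hP)).trans (Bool.eq_not_iff.mpr (Ne.symm hs)).symm)).asymm hxy

theorem exists_isBoxFree_card_eq [LinearOrder ι] [WellFoundedLT ι] [Fintype ι] {κ α : Type*}
    [LinearOrder α] (σ : ι → κ → Bool) (hσ : Injective σ) (c₀ : κ) (hc₀ : ∀ p, σ p c₀ = true)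
    (f : Lex (ι → Bool) ↪o α) :
    ∃ T : Finset (κ → α), T.card = 2 ^ Fintype.card ι ∧ IsBoxFree T := by
  classical
  let pt : (ι → Bool) → κ → α := fun x c => f (maskedLex (σ · c) x)
  have hpt : Injective pt := fun x y h =>
    maskedLex_injective _ (f.injective (congrFun h c₀))
  refine ⟨univ.image pt, by simp [card_image_of_injective _ hpt], ?_⟩
  simp only [IsBoxFree, mem_image, mem_univ, true_and]
  rintro - ⟨x, rfl⟩ - ⟨y, rfl⟩ - ⟨z, rfl⟩ hxy - hyz hbox
  have hxy' := hpt.ne_iff.mp hxy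
  have hyz' := hpt.ne_iff.mp hyz
  obtain ⟨P, hP, hPlt⟩ := exists_forall_maskedLex_lt_iff hxy'
  obtain ⟨Q, -, hQlt⟩ := exists_forall_maskedLex_lt_iff hyz'
  -- `pt y` lies between `pt x` and `pt z`, so in every coordinate both comparisons agree.
  have hdir : ∀ c, x P = σ P c ↔ y Q = σ Q c := fun c =>
    (hPlt (σ · c)).symm.trans <| f.lt_iff_lt.symm.trans <|
      (Set.lt_iff_lt_of_mem_uIcc (hbox c) (f.injective.ne ((maskedLex_injective _).ne hxy'))
        (f.injective.ne ((maskedLex_injective _).ne hyz'))).trans <|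
      f.lt_iff_lt.trans (hQlt (σ · c))
  have hxPyQ : x P = y Q := Bool.eq_iff_iff.mpr (by simpa [hc₀] using hdir c₀)
  have hPQ : P = Q := hσ <| funext fun c => Bool.eq_of_eq_iff_eq (hxPyQ ▸ hdir c)
  exact hP (hxPyQ.trans (congrArg y hPQ).symm)

end MaskedLex

theorem gpNum_le_of_forall {V : Type} {G : SimpleGraph V} {B : ℕ}
    (h : ∀ S, IsGPSetOf G S → S.card ≤ B) : gpNum G ≤ B :=
  csSup_le ⟨0, ∅, rfl, by simp [IsGPSetOf]⟩ fun _ ⟨S, hS, hGS⟩ => hS ▸ h S hGS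

theorem IsGPSetOf.card_le_gpNum {V : Type} [Finite V] {G : SimpleGraph V} {S : Finset V}
    (hS : IsGPSetOf G S) : S.card ≤ gpNum G := by
  have := Fintype.ofFinite V
  exact le_csSup ⟨Fintype.card V, fun _ ⟨T, hT, _⟩ => hT ▸ T.card_le_univ⟩ ⟨S, rfl, hS⟩

namespace IsGridEquiv

variable {V : Type} {G : SimpleGraph V} {n k : ℕ} {e : V ≃ (Fin (n + 1) → Fin k)}

theorem gpNum_le_two_pow_two_pow (hG : IsGridEquiv G e) : gpNum G ≤ 2 ^ 2 ^ n :=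
  gpNum_le_of_forall fun S hS => by
    simpa using (hG.isGPSetOf_iff.mp hS).card_le_two_pow_two_pow

theorem two_pow_two_pow_le_gpNum (hG : IsGridEquiv G e) (hk : 2 ^ 2 ^ n ≤ k) :
    2 ^ 2 ^ n ≤ gpNum G := by
  have : Finite V := .of_equiv _ e.symm
  -- positions `Fin (2 ^ n)` stand for the sign patterns `Fin.cons true τ`
  let b : Fin (2 ^ n) ≃ (Fin n → Bool) := (Fintype.equivFinOfCardEq (by simp)).symm
  let f : Lex (Fin (2 ^ n) → Bool) ↪o Fin k :=
    (Fintype.orderIsoFinOfCardEq _ (by simp)).symm.toOrderEmbedding.trans (Fin.castLEOrderEmb hk)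
  obtain ⟨T, hTcard, hT⟩ := exists_isBoxFree_card_eq (fun p => Fin.cons true (b p))
    ((Fin.cons_right_injective _).comp b.injective) 0 (fun _ => Fin.cons_zero _ _) f
  have hS : IsGPSetOf G (T.map e.symm.toEmbedding) := by
    simpa [hG.isGPSetOf_iff, Finset.map_map] using hT
  simpa [hTcard] using hS.card_le_gpNum

end IsGridEquiv

/-- The difference in the inequality `gp(G □ H) ≥ gp(G) + gp(H) − 2` can be
arbitrarily large: for every integer `M` there are finite connected graphs
`G` and `H` with `gp(G □ H) − (gp(G) + gp(H) − 2) ≥ M`. -/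
theorem gp_boxProd_gap_arbitrarily_large (M : ℤ) :
    ∃ (V W : Type) (G : SimpleGraph V) (H : SimpleGraph W),
      Finite V ∧ Finite W ∧ G.Connected ∧ H.Connected ∧
      M ≤ (gpNum (G.boxProd H) : ℤ) - ((gpNum G : ℤ) + (gpNum H : ℤ) - 2) := by
  obtain ⟨m, hm⟩ : ∃ m : ℕ, M ≤ m := ⟨M.toNat, Int.self_le_toNat M⟩
  have : NeZero (2 ^ 2 ^ (m + 1)) := ⟨by positivity⟩
  obtain ⟨V, G, e, hG⟩ := exists_isGridEquiv (2 ^ 2 ^ (m + 1)) m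
  have : Nonempty V := e.nonempty
  have hH := isGridEquiv_pathGraph (2 ^ 2 ^ (m + 1))
  refine ⟨V, _, G, _, .of_equiv _ e.symm, inferInstance, hG.connected, hH.connected, ?_⟩
  have hGH := hG.boxProd_pathGraph.two_pow_two_pow_le_gpNum le_rfl
  have hGle := hG.gpNum_le_two_pow_two_pow
  have hHle : gpNum _ ≤ 2 := hH.gpNum_le_two_pow_two_pow
  have hA : m + 2 ^ 2 ^ m ≤ 2 ^ 2 ^ (m + 1) := by
    have : m < 2 ^ 2 ^ m :=
      Nat.lt_two_pow_self.trans (Nat.pow_lt_pow_right one_lt_two Nat.lt_two_pow_self)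
    rw [pow_succ, pow_mul, sq]
    nlinarith
  omega
end
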